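/- For every integer m ≥ 2 there exists an element g in the subalgebra of R generated by w₂² and w₃² such that Q_m(Q_1(w₂)) = g · w₃⁴. -/

import Mathlib

/-! Milnor operations are derivations, so in characteristic 2 they kill squares and
`Q_m Q_1 w₂ = (s₁^{2^{m-1}} s₂ + s₁ s₂^{2^{m-1}})⁴`. Both `s₁` and `s₂` are roots of the Dickson
polynomial `T⁴ + w₂ T² + w₃ T`, so applying Frobenius to `s⁴ = w₂ s² + w₃ s` shows that their
`2ⁿ`-th powers obey one linear recurrence with coefficients powers of `w₂` and `w₃`. Hence
`s₁^{2ⁿ} s₂ + s₁ s₂^{2ⁿ} = Uₙ w₃` for a polynomial `Uₙ` in `w₂, w₃`, and `(Uₙ w₃)⁴ = (Uₙ²)² w₃⁴`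
where `Uₙ²` is the same polynomial in `w₂², w₃²`. -/

open MvPolynomial

/-- `R = ℤ/2[s₁, s₂]`, the mod 2 cohomology of `B(ℤ/2)²`. -/
noncomputable abbrev R : Type := MvPolynomial (Fin 2) (ZMod 2)

/-- The `m`-th Milnor operation `Q_m`, the derivation with `Q_m(sᵢ) = sᵢ^(2^(m+1))`. -/
noncomputable def Q (m : ℕ) : Derivation (ZMod 2) R R :=
  MvPolynomial.mkDerivation (ZMod 2) (fun i : Fin 2 => (X i : R) ^ 2 ^ (m + 1))

/-- `w₂ = s₁² + s₁s₂ + s₂²`. -/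
noncomputable def w₂ : R := X 0 ^ 2 + X 0 * X 1 + X 1 ^ 2

/-- `w₃ = s₁²s₂ + s₁s₂²`. -/
noncomputable def w₃ : R := X 0 ^ 2 * X 1 + X 0 * X 1 ^ 2

section LucasSequence

variable {A B : Type*} [CommSemiring A] [CommSemiring B]

/-- The Lucas sequence of the recurrence obeyed by `x ^ 2 ^ n` when `x⁴ = a x² + b x` in
characteristic 2. -/
noncomputable def frobLucas (a b : A) : ℕ → A
  | 0 => 0
  | 1 => 1
  | n + 2 => a ^ 2 ^ n * frobLucas a b (n + 1) + b ^ 2 ^ n * frobLucas a b n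

theorem frobLucas_mem_adjoin {K : Type*} [CommSemiring K] [Algebra K A] (a b : A) :
    ∀ n, frobLucas a b n ∈ Algebra.adjoin K ({a, b} : Set A)
  | 0 => zero_mem _
  | 1 => one_mem _
  | n + 2 =>
    add_mem
      (mul_mem (pow_mem (Algebra.subset_adjoin (by simp)) _) (frobLucas_mem_adjoin a b (n + 1)))
      (mul_mem (pow_mem (Algebra.subset_adjoin (by simp)) _) (frobLucas_mem_adjoin a b n))

theorem map_frobLucas (f : A →+* B) (a b : A) :
    ∀ n, f (frobLucas a b n) = frobLucas (f a) (f b) n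
  | 0 => map_zero f
  | 1 => map_one f
  | n + 2 => by
    simp only [frobLucas, map_add, map_mul, map_pow, map_frobLucas f a b n,
      map_frobLucas f a b (n + 1)]

end LucasSequence

section CharTwo

variable {A : Type*} [CommRing A] [CharP A 2]

theorem frobLucas_sq (a b : A) (n : ℕ) : frobLucas a b n ^ 2 = frobLucas (a ^ 2) (b ^ 2) n :=
  map_frobLucas (frobenius A 2) a b n

theorem pow_two_pow_add_two {x a b : A} (hx : x ^ 4 = a * x ^ 2 + b * x) (n : ℕ) :
    x ^ 2 ^ (n + 2) = a ^ 2 ^ n * x ^ 2 ^ (n + 1) + b ^ 2 ^ n * x ^ 2 ^ n := by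
  have h := congrArg (iterateFrobenius A 2 n) hx
  simp only [iterateFrobenius_def, add_pow_char_pow, mul_pow, ← pow_mul] at h
  convert h using 3 <;> ring

theorem pow_two_pow_mul_add_mul_pow_two_pow {x y a b : A} (hx : x ^ 4 = a * x ^ 2 + b * x)
    (hy : y ^ 4 = a * y ^ 2 + b * y) (n : ℕ) :
    x ^ 2 ^ n * y + x * y ^ 2 ^ n = frobLucas a b n * (x ^ 2 * y + x * y ^ 2) := by
  induction n using Nat.twoStepInduction with
  | zero => simp [frobLucas, CharTwo.add_self_eq_zero]
  | one => simp [frobLucas]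
  | more n ih₀ ih₁ =>
    rw [pow_two_pow_add_two hx, pow_two_pow_add_two hy, frobLucas]
    linear_combination a ^ 2 ^ n * ih₁ + b ^ 2 ^ n * ih₀

end CharTwo

theorem Derivation.map_pow_char {K A : Type*} [CommSemiring K] [CommSemiring A] [Algebra K A]
    (p : ℕ) [CharP A p] (D : Derivation K A A) (x : A) : D (x ^ p) = 0 := by
  rw [D.leibniz_pow, nsmul_eq_mul, CharP.cast_eq_zero, zero_mul]

theorem X_pow_four (i : Fin 2) : (X i : R) ^ 4 = w₂ * X i ^ 2 + w₃ * X i := by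
  have h2 : (2 : R) = 0 := CharTwo.two_eq_zero
  fin_cases i <;> simp only [w₂, w₃, Fin.zero_eta, Fin.mk_one]
  · linear_combination (-(X 0 ^ 3 * X 1 + X 0 ^ 2 * X 1 ^ 2) : R) * h2
  · linear_combination (-(X 1 ^ 3 * X 0 + X 1 ^ 2 * X 0 ^ 2) : R) * h2

theorem Q_X (m : ℕ) (i : Fin 2) : Q m (X i) = X i ^ 2 ^ (m + 1) :=
  mkDerivation_X _ _ _

theorem Q_w₂ (m : ℕ) : Q m w₂ = X 0 ^ 2 ^ (m + 1) * X 1 + X 0 * X 1 ^ 2 ^ (m + 1) := by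
  simp only [w₂, map_add, Derivation.map_pow_char 2, Derivation.leibniz, Q_X, smul_eq_mul]
  ring

theorem Q_succ_Q_one_w₂ (m : ℕ) :
    Q (m + 1) (Q 1 w₂) = (X 0 ^ 2 ^ m * X 1 + X 0 * X 1 ^ 2 ^ m) ^ 4 := by
  have h4 : ∀ x : R, x ^ 2 ^ (1 + 1) = (x ^ 2) ^ 2 := fun x => by ring
  rw [Q_w₂, show (4 : ℕ) = 2 ^ 2 from rfl, add_pow_char_pow]
  simp only [map_add, Derivation.leibniz, h4, Derivation.map_pow_char 2, Q_X, smul_eq_mul]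
  ring

theorem stmt_1 (m : ℕ) (hm : 2 ≤ m) :
    ∃ g ∈ Algebra.adjoin (ZMod 2) ({w₂ ^ 2, w₃ ^ 2} : Set R),
      Q m (Q 1 w₂) = g * w₃ ^ 4 := by
  obtain ⟨n, rfl⟩ : ∃ n, m = n + 1 := ⟨m - 1, by omega⟩
  refine ⟨frobLucas (w₂ ^ 2) (w₃ ^ 2) n ^ 2, pow_mem (frobLucas_mem_adjoin _ _ n) 2, ?_⟩
  rw [Q_succ_Q_one_w₂, pow_two_pow_mul_add_mul_pow_two_pow (X_pow_four 0) (X_pow_four 1),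
    ← frobLucas_sq, w₃]
  ring
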